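/- Let V be a real vector space of finite dimension m, let E ≤ V be a subspace, ε a skew-symmetric bilinear form on E, and B ∈ ∧²V* a 2-form. Then the B-transform exp(B) maps L(E,ε) onto L(E, ε + i*B), where i*B denotes the restriction of B to E. In particular, B-transforms do not change the subspace E = π_V(L), hence preserve the type (the codimension of π_V(L) in V) of a maximal isotropic, and every maximal isotropic L(E,ε) is the image of L(E,0) = E ⊕ Ann(E) under some B-transform. -/

import Mathlib

open Module

/-- The canonical symmetric bilinear form on `V ⊕ V*`,
`⟨X+ξ, Y+η⟩ = (1/2)(ξ(Y) + η(X))`. -/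
noncomputable def canForm (V : Type*) [AddCommGroup V] [Module ℝ V] :
    LinearMap.BilinForm ℝ (V × Module.Dual ℝ V) :=
  LinearMap.mk₂ ℝ (fun p q => (p.2 q.1 + q.2 p.1) / 2)
    (fun p p' q => by simp; ring)
    (fun c p q => by simp; ring)
    (fun p q q' => by simp; ring)
    (fun c p q => by simp; ring)

/-- The maximal isotropic subspace `L(E,ε) = {X + ξ ∈ E ⊕ V* : ξ|_E = ε(X)}`
determined by a subspace `E ≤ V` and a bilinear form `ε` on `E`. -/
noncomputable def LEeps {V : Type*} [AddCommGroup V] [Module ℝ V]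
    (E : Submodule ℝ V) (ε : E →ₗ[ℝ] E →ₗ[ℝ] ℝ) :
    Submodule ℝ (V × Module.Dual ℝ V) where
  carrier := {p | ∃ h : p.1 ∈ E, ∀ y : E, p.2 y.1 = ε ⟨p.1, h⟩ y}
  add_mem' := by
    rintro p q ⟨hp, hp2⟩ ⟨hq, hq2⟩
    refine ⟨add_mem hp hq, fun y => ?_⟩
    have h1 : (⟨(p + q).1, add_mem hp hq⟩ : E) = ⟨p.1, hp⟩ + ⟨q.1, hq⟩ := rfl
    rw [h1, map_add]
    simp [hp2 y, hq2 y]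
  zero_mem' := ⟨zero_mem E, fun y => by
    have h1 : (⟨(0 : V × Module.Dual ℝ V).1, zero_mem E⟩ : E) = 0 := rfl
    rw [h1, map_zero]
    simp⟩
  smul_mem' := by
    rintro c p ⟨hp, hp2⟩
    refine ⟨Submodule.smul_mem E c hp, fun y => ?_⟩
    have h1 : (⟨(c • p).1, Submodule.smul_mem E c hp⟩ : E) = c • (⟨p.1, hp⟩ : E) := rfl
    rw [h1, map_smul]
    simp [hp2 y]

/-- The B-field transform `exp(B) : X + ξ ↦ X + ξ + i_X B` of `V ⊕ V*`,
for a 2-form `B` viewed as a skew map `V → V*`. -/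
noncomputable def expB {V : Type*} [AddCommGroup V] [Module ℝ V]
    (B : V →ₗ[ℝ] Module.Dual ℝ V) :
    (V × Module.Dual ℝ V) →ₗ[ℝ] (V × Module.Dual ℝ V) :=
  LinearMap.id +
    (LinearMap.inr ℝ V (Module.Dual ℝ V)) ∘ₗ B ∘ₗ (LinearMap.fst ℝ V (Module.Dual ℝ V))

/-- The restriction `i*B` of a 2-form `B` on `V` to a subspace `E ≤ V`. -/
noncomputable def restrForm {V : Type*} [AddCommGroup V] [Module ℝ V]
    (E : Submodule ℝ V) (B : V →ₗ[ℝ] Module.Dual ℝ V) : E →ₗ[ℝ] E →ₗ[ℝ] ℝ :=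
  (B.domRestrict E).compl₂ E.subtype

lemma mem_LEeps {V : Type*} [AddCommGroup V] [Module ℝ V]
    (E : Submodule ℝ V) (ε : E →ₗ[ℝ] E →ₗ[ℝ] ℝ) (p : V × Module.Dual ℝ V) :
    p ∈ LEeps E ε ↔ ∃ h : p.1 ∈ E, ∀ y : E, p.2 y.1 = ε ⟨p.1, h⟩ y := Iff.rfl

lemma expB_apply {V : Type*} [AddCommGroup V] [Module ℝ V]
    (B : V →ₗ[ℝ] Module.Dual ℝ V) (p : V × Module.Dual ℝ V) :
    expB B p = (p.1, p.2 + B p.1) := by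
  simp [expB, Prod.ext_iff]

lemma expB_map_LEeps_aux {V : Type*} [AddCommGroup V] [Module ℝ V]
    (E : Submodule ℝ V) (ε : E →ₗ[ℝ] E →ₗ[ℝ] ℝ) (B : V →ₗ[ℝ] Module.Dual ℝ V) :
    (LEeps E ε).map (expB B) = LEeps E (ε + restrForm E B) := by
  ext p
  simp only [Submodule.mem_map, mem_LEeps]
  constructor
  · rintro ⟨q, ⟨hq, hq2⟩, rfl⟩
    rw [expB_apply]
    exact ⟨hq, fun y => by simp [hq2 y, restrForm]⟩
  · rintro ⟨hp, hp2⟩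
    refine ⟨(p.1, p.2 - B p.1), ⟨hp, fun y => ?_⟩, ?_⟩
    · have := hp2 y
      simp only [LinearMap.add_apply, restrForm, LinearMap.compl₂_apply,
        LinearMap.domRestrict_apply, Submodule.coe_subtype] at this
      simp [this]
    · rw [expB_apply]; simp

/-- `exp(B)` maps `L(E,ε)` onto `L(E, ε + i*B)`; in particular `B`-transforms do
not change `E = π_V(L)` (hence preserve the type), and every `L(E,ε)` is the image
of `L(E,0) = E ⊕ Ann(E)` under some `B`-transform. -/
theorem expB_map_LEeps
    (V : Type*) [AddCommGroup V] [Module ℝ V] [FiniteDimensional ℝ V]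
    (E : Submodule ℝ V) (ε : E →ₗ[ℝ] E →ₗ[ℝ] ℝ)
    (hskew : ∀ x y : E, ε x y = - ε y x)
    (B : V →ₗ[ℝ] Module.Dual ℝ V) (hB : ∀ x y : V, B x y = - B y x) :
    (LEeps E ε).map (expB B) = LEeps E (ε + restrForm E B) ∧
    ((LEeps E ε).map (expB B)).map (LinearMap.fst ℝ V (Module.Dual ℝ V)) =
      (LEeps E ε).map (LinearMap.fst ℝ V (Module.Dual ℝ V)) ∧
    LEeps E (0 : E →ₗ[ℝ] E →ₗ[ℝ] ℝ) = E.prod E.dualAnnihilator ∧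
    ∃ B' : V →ₗ[ℝ] Module.Dual ℝ V, (∀ x y : V, B' x y = - B' y x) ∧
      (LEeps E (0 : E →ₗ[ℝ] E →ₗ[ℝ] ℝ)).map (expB B') = LEeps E ε := by
  have hzero : LEeps E (0 : E →ₗ[ℝ] E →ₗ[ℝ] ℝ) = E.prod E.dualAnnihilator := by
    ext p
    simp only [mem_LEeps, Submodule.mem_prod, Submodule.mem_dualAnnihilator,
      LinearMap.zero_apply]
    constructor
    · rintro ⟨hp, hp2⟩
      exact ⟨hp, fun w hw => hp2 ⟨w, hw⟩⟩
    · rintro ⟨hp, hp2⟩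
      exact ⟨hp, fun y => hp2 y.1 y.2⟩
  refine ⟨expB_map_LEeps_aux E ε B, ?_, hzero, ?_⟩
  · rw [← Submodule.map_comp]
    congr 1
    ext p <;> simp [expB]
  · obtain ⟨F, hF⟩ := Submodule.exists_isCompl E
    set π := E.projectionOnto F hF with hπ
    refine ⟨(ε ∘ₗ π).compl₂ π, fun x y => by simpa using hskew (π x) (π y), ?_⟩
    rw [expB_map_LEeps_aux, zero_add]
    congr 1
    ext x y
    simp [restrForm, hπ, Submodule.projectionOnto_apply_left]
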